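/- Distinct fold columns for two coprime-period streams within one LCM window imply disambiguation: if x1, x2 are coprime, a1 < x1, a2 < x2, and the streams are {a1 + k*x1} and {a2 + k*x2} restricted to [0, L) with L = ρ*x1 ≤ x1*x2, then folding by x1 gives stream 1 a fold sum of ρ at column a1, while stream 2 contributes at most 1 to any column; hence if ρ ≥ 2 the unique column with fold sum ≥ ρ from stream 1's perspective is a1. -/
import Mathlib

lemma card_residue_aux (x a m : ℕ) (ha : a < x) :
    ((Finset.range (m * x)).filter (fun n => n % x = a)).card = m := by
  have hx : 0 < x := lt_of_le_of_lt (Nat.zero_le a) ha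
  rw [← Finset.card_range m]
  apply Finset.card_bij' (fun n _ => n / x) (fun k _ => k * x + a)
  all_goals try simp only [Finset.card_range]
  · intro n hn
    simp only [Finset.mem_filter, Finset.mem_range] at hn
    simp only [Finset.mem_range]
    exact Nat.div_lt_of_lt_mul (by rw [mul_comm]; exact hn.1)
  · intro k hk
    simp only [Finset.mem_range] at hk
    simp only [Finset.mem_filter, Finset.mem_range]
    constructor
    · calc k * x + a < k * x + x := by omega
        _ = (k + 1) * x := by ring
        _ ≤ m * x := Nat.mul_le_mul_right x (by omega)
    · rw [add_comm, Nat.add_mul_mod_self_right, Nat.mod_eq_of_lt ha]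
  · intro n hn
    simp only [Finset.mem_filter, Finset.mem_range] at hn
    conv_rhs => rw [← Nat.div_add_mod n x]
    rw [hn.2, Nat.mul_comm]
  · intro k hk
    rw [mul_comm, Nat.mul_add_div hx, Nat.div_eq_of_lt ha, add_zero]

theorem coprime_streams_disambiguation (x1 x2 a1 a2 ρ : ℕ)
    (hcop : Nat.Coprime x1 x2) (hx1 : 0 < x1) (hx2 : 0 < x2)
    (ha1 : a1 < x1) (ha2 : a2 < x2) (hρ : 2 ≤ ρ)
    (hL : ρ * x1 ≤ x1 * x2) :
    (ρ ≤ ((Finset.range (ρ * x1)).filter (fun n => n % x1 = a1 ∧ n % x1 = a1 % x1)).card +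
        ((Finset.range (ρ * x1)).filter (fun n => n % x1 = a1 ∧ n % x2 = a2 % x2)).card) ∧
    ∀ c < x1, c ≠ a1 →
      ((Finset.range (ρ * x1)).filter (fun n => n % x1 = c ∧ n % x1 = a1 % x1)).card +
        ((Finset.range (ρ * x1)).filter (fun n => n % x1 = c ∧ n % x2 = a2 % x2)).card ≤ 1 := by
  have ha1m : a1 % x1 = a1 := Nat.mod_eq_of_lt ha1
  constructor
  · have h1 : ((Finset.range (ρ * x1)).filter
        (fun n => n % x1 = a1 ∧ n % x1 = a1 % x1)).card = ρ := by
      simp only [ha1m, and_self]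
      exact card_residue_aux x1 a1 ρ ha1
    omega
  · intro c hc hca
    have h1 : ((Finset.range (ρ * x1)).filter
        (fun n => n % x1 = c ∧ n % x1 = a1 % x1)).card = 0 := by
      rw [Finset.card_eq_zero, Finset.filter_eq_empty_iff]
      intro n _
      rw [ha1m]
      rintro ⟨h, h'⟩
      exact hca (h ▸ h')
    rw [h1, zero_add]
    apply Finset.card_le_one.mpr
    intro n hn m hm
    simp only [Finset.mem_filter, Finset.mem_range] at hn hm
    have hmod : n ≡ m [MOD x1 * x2] := by
      rw [← Nat.modEq_and_modEq_iff_modEq_mul hcop]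
      exact ⟨(Nat.ModEq.symm (hn.2.1 ▸ hm.2.1 ▸ rfl : n % x1 = m % x1)).symm,
        (hn.2.2.trans hm.2.2.symm : n % x2 = m % x2)⟩
    have := hmod
    unfold Nat.ModEq at this
    rw [Nat.mod_eq_of_lt (lt_of_lt_of_le hn.1 hL),
      Nat.mod_eq_of_lt (lt_of_lt_of_le hm.1 hL)] at this
    exact this
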